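/- Let g := [[1_n, Z·J_n],[0, 1_n]] ∈ GL_{2n}(R) (block form with n×n blocks). Then g^{−1}·σ(X)·g = [[s·1_n, 0],[J_n·Ξ, −s·1_n]]. -/
import Mathlib


open Matrix BigOperators

noncomputable section

namespace Stmt5

/-! ### The polynomial ring `R` in the variables `z i j`, `ξ i j` (`i < j`), and `s` -/

abbrev Var (n : ℕ) := ({p : Fin n × Fin n // p.1 < p.2}) ⊕ (({p : Fin n × Fin n // p.1 < p.2}) ⊕ Unit)

abbrev R (n : ℕ) := MvPolynomial (Var n) ℂ

def zv (n : ℕ) (i j : Fin n) : R n :=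
  if h : i < j then MvPolynomial.X (Sum.inl ⟨(i, j), h⟩)
  else if h' : j < i then -MvPolynomial.X (Sum.inl ⟨(j, i), h'⟩)
  else 0

def xiv (n : ℕ) (i j : Fin n) : R n :=
  if h : i < j then MvPolynomial.X (Sum.inr (Sum.inl ⟨(i, j), h⟩))
  else if h' : j < i then -MvPolynomial.X (Sum.inr (Sum.inl ⟨(j, i), h'⟩))
  else 0

def sv (n : ℕ) : R n := MvPolynomial.X (Sum.inr (Sum.inr ()))

def Zmat (n : ℕ) : Matrix (Fin n) (Fin n) (R n) := Matrix.of fun i j => zv n i j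

def Ximat (n : ℕ) : Matrix (Fin n) (Fin n) (R n) := Matrix.of fun i j => xiv n i j

/-- `J_n`: ones on the antidiagonal -/
def Jmat (n : ℕ) : Matrix (Fin n) (Fin n) (R n) :=
  Matrix.of fun i j => if (i : ℕ) + (j : ℕ) + 1 = n then 1 else 0

/-- `A` with `A_{ij} := s·δ_{ij} − Σ_k z_{ki} ξ_{kj}` -/
def Amat (n : ℕ) : Matrix (Fin n) (Fin n) (R n) := Matrix.of fun i j =>
  (if i = j then sv n else 0) - ∑ k : Fin n, zv n k i * xiv n k j

/-- `b` (the given formula is alternating in `(i,j)`, so we use it for all `i, j`) -/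
def bmat (n : ℕ) : Matrix (Fin n) (Fin n) (R n) := Matrix.of fun i j =>
  -(2 * sv n * zv n i j) - ∑ k : Fin n, ∑ l : Fin n,
    if k < l then (zv n k i * zv n j l - zv n k j * zv n i l) * xiv n k l else 0

/-- `σ(X)` in `n × n` block form -/
def sigma (n : ℕ) : Matrix (Fin n ⊕ Fin n) (Fin n ⊕ Fin n) (R n) :=
  Matrix.fromBlocks (Amat n) (bmat n * Jmat n) (Jmat n * Ximat n)
    (-(Jmat n * (Amat n)ᵀ * Jmat n))

/-- `g := [[1, Z·J_n], [0, 1]]` -/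
def gmat (n : ℕ) : Matrix (Fin n ⊕ Fin n) (Fin n ⊕ Fin n) (R n) :=
  Matrix.fromBlocks 1 (Zmat n * Jmat n) 0 1


lemma zv_skew (n : ℕ) (i j : Fin n) : zv n i j = - zv n j i := by
  unfold zv
  rcases lt_trichotomy i j with h | h | h
  · rw [dif_pos h, dif_neg (lt_asymm h), dif_pos h, neg_neg]
  · subst h; simp
  · rw [dif_neg (lt_asymm h), dif_pos h, dif_pos h]

lemma xiv_skew (n : ℕ) (i j : Fin n) : xiv n i j = - xiv n j i := by
  unfold xiv
  rcases lt_trichotomy i j with h | h | h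
  · rw [dif_pos h, dif_neg (lt_asymm h), dif_pos h, neg_neg]
  · subst h; simp
  · rw [dif_neg (lt_asymm h), dif_pos h, dif_pos h]

lemma xiv_self (n : ℕ) (i : Fin n) : xiv n i i = 0 := by
  unfold xiv; simp

lemma Jmat_apply (n : ℕ) (i j : Fin n) :
    Jmat n i j = if j = Fin.rev i then 1 else 0 := by
  unfold Jmat
  simp only [Matrix.of_apply]
  by_cases h : (i : ℕ) + (j : ℕ) + 1 = n
  · rw [if_pos h, if_pos]
    rw [Fin.ext_iff, Fin.val_rev]
    omega
  · rw [if_neg h, if_neg]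
    intro hc
    apply h
    subst hc
    rw [Fin.val_rev]
    omega

lemma J_mul_J (n : ℕ) : Jmat n * Jmat n = 1 := by
  ext i j
  rw [Matrix.mul_apply]
  simp only [Jmat_apply, ite_mul, one_mul, zero_mul]
  rw [Finset.sum_ite_eq' Finset.univ (Fin.rev i) (fun k => if j = Fin.rev k then 1 else 0)]
  simp [Matrix.one_apply, Fin.rev_rev, eq_comm]

lemma A_eq (n : ℕ) : Amat n = sv n • (1 : Matrix (Fin n) (Fin n) (R n)) + Zmat n * Ximat n := by
  refine Matrix.ext fun i j => ?_
  simp only [Amat, Matrix.of_apply, Matrix.add_apply, Matrix.smul_apply, Matrix.one_apply,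
    Matrix.mul_apply, Zmat, Ximat, smul_eq_mul, mul_ite, mul_one, mul_zero]
  rw [sub_eq_add_neg, ← Finset.sum_neg_distrib]
  congr 1
  apply Finset.sum_congr rfl
  intro k _
  rw [zv_skew n k i]
  ring

lemma Zt (n : ℕ) : (Zmat n)ᵀ = -(Zmat n) := by
  refine Matrix.ext fun i j => ?_; simp only [Matrix.transpose_apply, Matrix.neg_apply, Zmat, Matrix.of_apply]
  exact zv_skew n j i

lemma Xit (n : ℕ) : (Ximat n)ᵀ = -(Ximat n) := by
  refine Matrix.ext fun i j => ?_; simp only [Matrix.transpose_apply, Matrix.neg_apply, Ximat, Matrix.of_apply]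
  exact xiv_skew n j i

lemma b_eq (n : ℕ) :
    bmat n = (-(2 * sv n)) • Zmat n - Zmat n * Ximat n * Zmat n := by
  refine Matrix.ext fun i j => ?_
  simp only [bmat, Matrix.of_apply, Matrix.sub_apply, Matrix.smul_apply,
    Matrix.mul_apply, Zmat, Ximat, smul_eq_mul]
  have h1 : -(2 * sv n * zv n i j) = -(2 * sv n) * zv n i j := by ring
  rw [h1]
  congr 1
  -- reduce RHS double sum
  have hr : ∑ l : Fin n, (∑ k : Fin n, zv n i k * xiv n k l) * zv n l j
      = ∑ k : Fin n, ∑ l : Fin n, zv n i k * xiv n k l * zv n l j := by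
    rw [Finset.sum_comm]
    apply Finset.sum_congr rfl
    intro l _
    rw [Finset.sum_mul]
  rw [hr]
  set f : Fin n → Fin n → R n := fun k l => zv n i k * xiv n k l * zv n l j with hf
  set g : Fin n → Fin n → R n := fun k l =>
    if k < l then (zv n k i * zv n j l - zv n k j * zv n i l) * xiv n k l else 0 with hg
  have hanti : ∀ k l, (g k l - f k l) + (g l k - f l k) = 0 := by
    intro k l
    rcases lt_trichotomy k l with h | h | h
    · simp only [hf, hg, if_pos h, if_neg (lt_asymm h)]
      rw [zv_skew n k i, zv_skew n j l, xiv_skew n l k]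
      ring
    · subst h
      simp only [hf, hg, lt_irrefl, if_neg (lt_irrefl k), xiv_self]
      ring
    · simp only [hf, hg, if_pos h, if_neg (lt_asymm h)]
      rw [zv_skew n l i, zv_skew n j k, xiv_skew n k l]
      ring
  have hS : (∑ k : Fin n, ∑ l : Fin n, (g k l - f k l)) = 0 := by
    have h2 : (∑ k : Fin n, ∑ l : Fin n, (g k l - f k l))
        + (∑ k : Fin n, ∑ l : Fin n, (g k l - f k l)) = 0 := by
      conv_lhs => rw [show (∑ k : Fin n, ∑ l : Fin n, (g k l - f k l))
        + (∑ k : Fin n, ∑ l : Fin n, (g k l - f k l))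
        = (∑ k : Fin n, ∑ l : Fin n, (g k l - f k l))
        + (∑ l : Fin n, ∑ k : Fin n, (g k l - f k l)) from by rw [Finset.sum_comm]]
      rw [← Finset.sum_add_distrib]
      apply Finset.sum_eq_zero
      intro k _
      rw [← Finset.sum_add_distrib]
      apply Finset.sum_eq_zero
      intro l _
      exact hanti k l
    have h3 : (2 : R n) * (∑ k : Fin n, ∑ l : Fin n, (g k l - f k l)) = 0 := by
      rw [two_mul]; exact h2
    rcases mul_eq_zero.mp h3 with h4 | h4
    · exact absurd h4 two_ne_zero
    · exact h4
  have h6 : (∑ k : Fin n, ∑ l : Fin n, g k l) - (∑ k : Fin n, ∑ l : Fin n, f k l) = 0 := by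
    rw [← Finset.sum_sub_distrib]
    simp_rw [← Finset.sum_sub_distrib]
    exact hS
  rw [sub_eq_zero.mp h6]

/-- `g ∈ GL_{2n}(R)` and `g⁻¹·σ(X)·g = [[s·1, 0], [J_n·Ξ, −s·1]]`. -/
theorem conj_sigma (n : ℕ) (hn : 1 ≤ n) :
    IsUnit (gmat n).det ∧
    (gmat n)⁻¹ * sigma n * gmat n =
      Matrix.fromBlocks (sv n • 1) 0 (Jmat n * Ximat n) (-(sv n • 1)) := by
  have hJ := J_mul_J n
  set D : Matrix (Fin n ⊕ Fin n) (Fin n ⊕ Fin n) (R n) :=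
    Matrix.fromBlocks (sv n • 1) 0 (Jmat n * Ximat n) (-(sv n • 1)) with hD
  set ginv : Matrix (Fin n ⊕ Fin n) (Fin n ⊕ Fin n) (R n) :=
    Matrix.fromBlocks 1 (-(Zmat n * Jmat n)) 0 1 with hginv
  have hgr : gmat n * ginv = 1 := by
    rw [gmat, hginv, Matrix.fromBlocks_multiply]
    simp [← Matrix.fromBlocks_one]
  have hgl : ginv * gmat n = 1 := mul_eq_one_comm.mp hgr
  have hAt : (Amat n)ᵀ = sv n • (1 : Matrix (Fin n) (Fin n) (R n)) + Ximat n * Zmat n := by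
    rw [A_eq, Matrix.transpose_add, Matrix.transpose_smul, Matrix.transpose_one,
      Matrix.transpose_mul, Zt, Xit, Matrix.neg_mul, Matrix.mul_neg, neg_neg]
  have hTL : Amat n = sv n • 1 + Zmat n * Jmat n * (Jmat n * Ximat n) := by
    rw [A_eq, Matrix.mul_assoc, ← Matrix.mul_assoc (Jmat n), hJ, Matrix.one_mul]
  have hTR : Amat n * (Zmat n * Jmat n) + bmat n * Jmat n
      = Zmat n * Jmat n * (-(sv n • 1)) := by
    rw [A_eq, b_eq]
    simp only [Matrix.add_mul, Matrix.sub_mul, Matrix.smul_mul, Matrix.mul_smul,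
      Matrix.one_mul, Matrix.mul_one, Matrix.mul_neg, Matrix.neg_mul, Matrix.mul_assoc]
    module
  have hBR : Jmat n * Ximat n * (Zmat n * Jmat n) + (-(Jmat n * (Amat n)ᵀ * Jmat n))
      = -(sv n • 1) := by
    rw [hAt]
    simp only [Matrix.mul_add, Matrix.add_mul, Matrix.mul_smul, Matrix.smul_mul,
      Matrix.mul_one, Matrix.one_mul, Matrix.mul_assoc, hJ]
    module
  have key : sigma n * gmat n = gmat n * D := by
    rw [sigma, gmat, hD, Matrix.fromBlocks_multiply, Matrix.fromBlocks_multiply]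
    simp only [Matrix.mul_one, Matrix.mul_zero, Matrix.one_mul, Matrix.zero_mul,
      add_zero, zero_add]
    rw [hTR, hBR, ← hTL]
  refine ⟨Matrix.isUnit_det_of_right_inverse hgr, ?_⟩
  rw [Matrix.inv_eq_right_inv hgr]
  calc ginv * sigma n * gmat n = ginv * (gmat n * D) := by rw [Matrix.mul_assoc, key]
    _ = D := by rw [← Matrix.mul_assoc, hgl, Matrix.one_mul]


end Stmt5
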